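/- The dimension of the minimal nonzero nilpotent adjoint orbit of a finite-dimensional complex simple Lie algebra equals 2h∨ − 2, where h∨ is the dual Coxeter number. -/

import Mathlib

open RealInnerProductSpace Finset
open scoped Classical

/-- The data of a reduced irreducible (crystallographic) root system of a
finite-dimensional complex simple Lie algebra, realized in a real inner
product space, together with a choice of positive roots and the highest
root `θ`, with the invariant form normalized so that `(θ,θ) = 2`. -/
structure SimpleRootData (V : Type*) [NormedAddCommGroup V]
    [InnerProductSpace ℝ V] [FiniteDimensional ℝ V] where
  /-- the set of roots Δ -/
  Δ : Finset V
  /-- the set of positive roots Δ₊ -/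
  Pos : Finset V
  /-- the highest root θ -/
  θ : V
  zero_not_mem : (0 : V) ∉ Δ
  span_eq_top : Submodule.span ℝ (Δ : Set V) = ⊤
  neg_mem : ∀ α ∈ Δ, -α ∈ Δ
  reflect_mem : ∀ α ∈ Δ, ∀ β ∈ Δ,
    β - (2 * (inner ℝ β α : ℝ) / (inner ℝ α α : ℝ)) • α ∈ Δ
  integral : ∀ α ∈ Δ, ∀ β ∈ Δ, ∃ n : ℤ, 2 * (inner ℝ β α : ℝ) / (inner ℝ α α : ℝ) = (n : ℝ)
  reduced : ∀ α ∈ Δ, ∀ t : ℝ, t • α ∈ Δ → t = 1 ∨ t = -1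
  /-- irreducibility (simplicity of the Lie algebra) -/
  irreducible : ∀ s ⊆ Δ, (∀ α ∈ s, ∀ β ∈ Δ, β ∉ s → (inner ℝ α β : ℝ) = 0) →
    s = ∅ ∨ s = Δ
  pos_subset : Pos ⊆ Δ
  pos_iff : ∀ α ∈ Δ, α ∈ Pos ↔ -α ∉ Pos
  pos_add : ∀ α ∈ Pos, ∀ β ∈ Pos, α + β ∈ Δ → α + β ∈ Pos
  θ_pos : θ ∈ Pos
  /-- θ is the highest root -/
  θ_highest : ∀ α ∈ Pos, θ + α ∉ Δ
  /-- normalization (θ,θ) = 2 -/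
  θ_norm : (inner ℝ θ θ : ℝ) = 2

namespace SimpleRootData

variable {V : Type*} [NormedAddCommGroup V] [InnerProductSpace ℝ V]
  [FiniteDimensional ℝ V] (D : SimpleRootData V)

/-- ρ, half the sum of the positive roots. -/
noncomputable def ρ : V := (2 : ℝ)⁻¹ • ∑ α ∈ D.Pos, α

/-- The dual Coxeter number h∨ = (ρ,θ) + 1. -/
noncomputable def h : ℝ := (inner ℝ D.ρ D.θ : ℝ) + 1

/-- The reflection r_θ in the highest root θ. -/
noncomputable def rθ (x : V) : V := x - (2 * (inner ℝ x D.θ : ℝ) / (inner ℝ D.θ D.θ : ℝ)) • D.θ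

/-- A positive root α is *special* if θ − α is also a root. -/
def IsSpecial (α : V) : Prop := α ∈ D.Pos ∧ D.θ - α ∈ D.Δ

/-- The set of special roots. -/
noncomputable def specials : Finset V :=
  D.Pos.filter fun α => D.θ - α ∈ D.Δ

/-- The set of positive roots not orthogonal to θ. -/
noncomputable def nonOrth : Finset V :=
  D.Pos.filter fun α => (inner ℝ α D.θ : ℝ) ≠ 0

end SimpleRootData

open SimpleRootData

variable {V : Type*} [NormedAddCommGroup V] [InnerProductSpace ℝ V]
  [FiniteDimensional ℝ V]

/-!
Since `(θ,θ) = 2`, the pairing `(α,θ)` of a positive root with `θ` is an integer. For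
`α ≠ θ` it is `0` or `1`: it is nonnegative because otherwise `θ + α` would be a root,
and if it were at least `2`, then `θ - α` would be a positive root with `(θ - α, θ) ≤ 0`,
and `θ + (θ - α)` would again be a root (for `(α,θ) = 2` it is `-r_θ(α)`). Hence
`2 (ρ,θ) = ∑_{α > 0} (α,θ) = 2 + (#{α > 0 : (α,θ) ≠ 0} - 1)`.
-/

namespace SimpleRootData

variable (D : SimpleRootData V)

lemma ne_zero_of_mem {x : V} (hx : x ∈ D.Δ) : x ≠ 0 :=
  fun h => D.zero_not_mem (h ▸ hx)

lemma inner_self_pos_of_mem {x : V} (hx : x ∈ D.Δ) : 0 < ⟪x, x⟫ :=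
  real_inner_self_pos.2 (D.ne_zero_of_mem hx)

lemma theta_mem : D.θ ∈ D.Δ := D.pos_subset D.θ_pos

lemma two_smul_theta_notMem : (2 : ℝ) • D.θ ∉ D.Δ := fun h => by
  rcases D.reduced D.θ D.theta_mem 2 h with h2 | h2 <;> norm_num at h2

lemma inner_mul_inner_self_lt {x y : V} (hx : x ∈ D.Δ) (hy : y ∈ D.Δ) (hxy : x ≠ y)
    (hxy' : x ≠ -y) : ⟪x, y⟫ * ⟪x, y⟫ < ⟪x, x⟫ * ⟪y, y⟫ := by
  refine (real_inner_mul_inner_self_le x y).lt_of_ne fun heq => ?_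
  have habs : ‖⟪x, y⟫‖ = ‖x‖ * ‖y‖ := by
    rw [Real.norm_eq_abs]
    refine (mul_self_inj (abs_nonneg _) (by positivity)).1 ?_
    rw [abs_mul_abs_self, heq, real_inner_self_eq_norm_mul_norm,
      real_inner_self_eq_norm_mul_norm]
    ring
  obtain ⟨r, -, rfl⟩ :=
    (norm_inner_eq_norm_iff (D.ne_zero_of_mem hx) (D.ne_zero_of_mem hy)).1 habs
  rcases D.reduced x hx r hy with rfl | rfl
  · exact hxy (one_smul ℝ x).symm
  · exact hxy' (by rw [neg_one_smul, neg_neg])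

lemma cartan_mul_cartan_lt_four {x y : V} (hx : x ∈ D.Δ) (hy : y ∈ D.Δ) (hxy : x ≠ y)
    (hxy' : x ≠ -y) : 2 * ⟪x, y⟫ / ⟪y, y⟫ * (2 * ⟪y, x⟫ / ⟪x, x⟫) < 4 := by
  have hxx := D.inner_self_pos_of_mem hx
  have hyy := D.inner_self_pos_of_mem hy
  rw [real_inner_comm x y, div_mul_div_comm, div_lt_iff₀ (by positivity)]
  nlinarith [D.inner_mul_inner_self_lt hx hy hxy hxy']

lemma add_mem_of_inner_neg {x y : V} (hx : x ∈ D.Δ) (hy : y ∈ D.Δ) (hneg : ⟪x, y⟫ < 0)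
    (hxy : x ≠ -y) : x + y ∈ D.Δ := by
  have hxx := D.inner_self_pos_of_mem hx
  have hyy := D.inner_self_pos_of_mem hy
  have hne : x ≠ y := by rintro rfl; linarith
  obtain ⟨p, hp⟩ := D.integral y hy x hx
  obtain ⟨q, hq⟩ := D.integral x hx y hy
  have hp0 : (p : ℝ) < 0 := hp ▸ div_neg_of_neg_of_pos (by linarith) hyy
  have hq0 : (q : ℝ) < 0 := hq ▸ div_neg_of_neg_of_pos (by rw [real_inner_comm]; linarith) hxx
  have hpq : (p : ℝ) * q < 4 := hp ▸ hq ▸ D.cartan_mul_cartan_lt_four hx hy hne hxy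
  have hp0 : p < 0 := by exact_mod_cast hp0
  have hq0 : q < 0 := by exact_mod_cast hq0
  have hpq : p * q < 4 := by exact_mod_cast hpq
  have hcases : p = -1 ∨ q = -1 := by
    by_contra! h
    nlinarith [show p ≤ -2 by omega, show q ≤ -2 by omega]
  rcases hcases with rfl | rfl
  · have := D.reflect_mem y hy x hx
    rwa [hp, Int.cast_neg, Int.cast_one, neg_one_smul, sub_neg_eq_add] at this
  · have := D.reflect_mem x hx y hy
    rwa [hq, Int.cast_neg, Int.cast_one, neg_one_smul, sub_neg_eq_add, add_comm] at this

lemma sub_mem_of_inner_pos {x y : V} (hx : x ∈ D.Δ) (hy : y ∈ D.Δ) (hpos : 0 < ⟪x, y⟫)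
    (hxy : x ≠ y) : x - y ∈ D.Δ := by
  rw [sub_eq_add_neg]
  exact D.add_mem_of_inner_neg hx (D.neg_mem y hy) (by rwa [inner_neg_right, neg_lt_zero])
    (by rwa [neg_neg])

lemma exists_inner_theta_eq_intCast {x : V} (hx : x ∈ D.Δ) : ∃ n : ℤ, ⟪x, D.θ⟫ = n := by
  obtain ⟨n, hn⟩ := D.integral D.θ D.theta_mem x hx
  exact ⟨n, by rw [← hn, D.θ_norm]; ring⟩

lemma inner_theta_nonneg {α : V} (hα : α ∈ D.Pos) : 0 ≤ ⟪α, D.θ⟫ := by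
  by_contra! hneg
  have hne : α ≠ -D.θ := by
    rintro rfl
    exact (D.pos_iff _ D.theta_mem).1 D.θ_pos hα
  exact D.θ_highest α hα (add_comm α D.θ ▸ D.add_mem_of_inner_neg (D.pos_subset hα)
    D.theta_mem hneg hne)

lemma theta_sub_mem_pos {α : V} (hα : α ∈ D.Pos) (hpos : 0 < ⟪α, D.θ⟫) (hne : α ≠ D.θ) :
    D.θ - α ∈ D.Pos := by
  have hsub := D.sub_mem_of_inner_pos (D.pos_subset hα) D.theta_mem hpos hne
  have hnot : α - D.θ ∉ D.Pos := fun h =>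
    D.θ_highest _ h (by rw [add_sub_cancel]; exact D.pos_subset hα)
  rw [← neg_sub]
  by_contra h
  exact hnot ((D.pos_iff _ hsub).2 h)

lemma inner_theta_le_one {α : V} (hα : α ∈ D.Pos) (hne : α ≠ D.θ) : ⟪α, D.θ⟫ ≤ 1 := by
  obtain ⟨n, hn⟩ := D.exists_inner_theta_eq_intCast (D.pos_subset hα)
  by_contra! hgt
  have hn2 : (2 : ℝ) ≤ n := by exact_mod_cast (show 1 < n by exact_mod_cast hn ▸ hgt)
  have hβ := D.theta_sub_mem_pos hα (by linarith) hne
  apply D.θ_highest _ hβ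
  rcases hn2.eq_or_lt with h2 | h3
  · have := D.neg_mem _ (D.reflect_mem D.θ D.theta_mem α (D.pos_subset hα))
    rwa [D.θ_norm, hn, ← h2, show -(α - (2 * 2 / 2 : ℝ) • D.θ) = D.θ + (D.θ - α) by module]
      at this
  · have hinner : ⟪D.θ - α, D.θ⟫ < 0 := by
      rw [inner_sub_left, D.θ_norm, hn]
      linarith
    have hβθ : D.θ - α ≠ -D.θ := fun h =>
      D.two_smul_theta_notMem (by
        rw [show (2 : ℝ) • D.θ = α by linear_combination (norm := module) h]
        exact D.pos_subset hα)
    rw [add_comm]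
    exact D.add_mem_of_inner_neg (D.pos_subset hβ) D.theta_mem hinner hβθ

lemma theta_mem_nonOrth : D.θ ∈ D.nonOrth :=
  mem_filter.2 ⟨D.θ_pos, by rw [D.θ_norm]; norm_num⟩

lemma inner_theta_eq_one {α : V} (hα : α ∈ D.nonOrth) (hne : α ≠ D.θ) : ⟪α, D.θ⟫ = 1 := by
  obtain ⟨hpos, hα0⟩ := mem_filter.1 hα
  obtain ⟨n, hn⟩ := D.exists_inner_theta_eq_intCast (D.pos_subset hpos)
  have h0 : 0 ≤ n := by exact_mod_cast hn ▸ D.inner_theta_nonneg hpos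
  have h1 : n ≤ 1 := by exact_mod_cast hn ▸ D.inner_theta_le_one hpos hne
  have hn0 : n ≠ 0 := by rintro rfl; exact hα0 (by rw [hn, Int.cast_zero])
  rw [hn, show n = 1 by omega, Int.cast_one]

lemma sum_inner_theta : ∑ α ∈ D.Pos, ⟪α, D.θ⟫ = D.nonOrth.card + 1 := by
  have hcard : 1 ≤ D.nonOrth.card := card_pos.2 ⟨D.θ, D.theta_mem_nonOrth⟩
  calc ∑ α ∈ D.Pos, ⟪α, D.θ⟫ = ∑ α ∈ D.nonOrth, ⟪α, D.θ⟫ := (sum_filter_ne_zero _).symm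
    _ = ⟪D.θ, D.θ⟫ + ∑ α ∈ D.nonOrth.erase D.θ, ⟪α, D.θ⟫ :=
      (add_sum_erase _ _ D.theta_mem_nonOrth).symm
    _ = 2 + ∑ α ∈ D.nonOrth.erase D.θ, (1 : ℝ) := by
      rw [D.θ_norm, sum_congr rfl fun α hα =>
        D.inner_theta_eq_one (mem_of_mem_erase hα) (ne_of_mem_erase hα)]
    _ = D.nonOrth.card + 1 := by
      rw [sum_const, card_erase_of_mem D.theta_mem_nonOrth, nsmul_one, Nat.cast_sub hcard]
      push_cast
      ring

lemma two_mul_inner_rho_theta : 2 * ⟪D.ρ, D.θ⟫ = ∑ α ∈ D.Pos, ⟪α, D.θ⟫ := by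
  rw [ρ, real_inner_smul_left, sum_inner, mul_inv_cancel_left₀ two_ne_zero]

end SimpleRootData

/-- the dimension of the minimal nonzero nilpotent adjoint orbit
equals 2h∨ − 2.  Here `d` is the dimension of the minimal nilpotent orbit,
which (Lemma 4.3.5 of Collingwood–McGovern, as recalled in the context)
equals one plus the number of positive roots not orthogonal to θ. -/
theorem dim_minimal_nilpotent_orbit (D : SimpleRootData V) (d : ℕ)
    (hd : d = 1 + D.nonOrth.card) :
    (d : ℝ) = 2 * D.h - 2 := by
  calc (d : ℝ) = D.nonOrth.card + 1 := by rw [hd]; push_cast; ring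
    _ = 2 * ⟪D.ρ, D.θ⟫ := by rw [D.two_mul_inner_rho_theta, D.sum_inner_theta]
    _ = 2 * D.h - 2 := by rw [h]; ring
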